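/- For every integer n ≥ 3, in the presented group G_n = ⟨R₁, ..., R_{n-1} | braid relations, far commutation, R₁² = R₂ R₁² R₂⟩, one has R₁⁴ = R₂⁴ = ... = R_{n-1}⁴, and this common element R₁⁴ is central in G_n. -/
import Mathlib

/-- The relators of the presentation
`⟨R₁, …, R_{n-1} | RᵢRᵢ₊₁Rᵢ = Rᵢ₊₁RᵢRᵢ₊₁ (1 ≤ i ≤ n-2); RᵢRⱼ = RⱼRᵢ (|i-j| ≥ 2);
R₁² = R₂R₁²R₂⟩`, as elements of the free group on `n - 1` generators
(indexed by `Fin (n-1)`, the generator `Rᵢ` being `FreeGroup.of ⟨i-1, _⟩`). -/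
def spinOctRels (n : ℕ) : Set (FreeGroup (Fin (n - 1))) :=
  { r | (∃ i j : Fin (n - 1), (j : ℕ) = (i : ℕ) + 1 ∧
          r = (FreeGroup.of i * FreeGroup.of j * FreeGroup.of i) *
              (FreeGroup.of j * FreeGroup.of i * FreeGroup.of j)⁻¹) ∨
        (∃ i j : Fin (n - 1), (i : ℕ) + 2 ≤ (j : ℕ) ∧
          r = (FreeGroup.of i * FreeGroup.of j) * (FreeGroup.of j * FreeGroup.of i)⁻¹) ∨
        (∃ i j : Fin (n - 1), (i : ℕ) = 0 ∧ (j : ℕ) = 1 ∧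
          r = (FreeGroup.of i) ^ 2 *
              (FreeGroup.of j * (FreeGroup.of i) ^ 2 * FreeGroup.of j)⁻¹) }

namespace SpinOct

variable {n : ℕ}

lemma rel_eq_one {r : FreeGroup (Fin (n-1))} (hr : r ∈ spinOctRels n) :
    PresentedGroup.mk (spinOctRels n) r = 1 :=
  (QuotientGroup.eq_one_iff r).mpr (Subgroup.subset_normalClosure hr)

lemma rel_eq {x y : FreeGroup (Fin (n-1))} (hr : x * y⁻¹ ∈ spinOctRels n) :
    PresentedGroup.mk (spinOctRels n) x = PresentedGroup.mk (spinOctRels n) y := by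
  have := rel_eq_one hr
  rw [map_mul, map_inv] at this
  exact mul_inv_eq_one.mp this

local notation "a" => (PresentedGroup.of (rels := spinOctRels n))

lemma braid {i j : Fin (n-1)} (h : (j : ℕ) = (i : ℕ) + 1) :
    a i * a j * a i = a j * a i * a j := by
  have := rel_eq (n := n) (Or.inl ⟨i, j, h, rfl⟩)
  simpa [PresentedGroup.of] using this

lemma far {i j : Fin (n-1)} (h : (i : ℕ) + 2 ≤ (j : ℕ)) :
    a i * a j = a j * a i := by
  have := rel_eq (n := n) (Or.inr (Or.inl ⟨i, j, h, rfl⟩))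
  simpa [PresentedGroup.of] using this

lemma sqrel {i j : Fin (n-1)} (h0 : (i : ℕ) = 0) (h1 : (j : ℕ) = 1) :
    (a i) ^ 2 = a j * (a i) ^ 2 * a j := by
  have := rel_eq (n := n) (Or.inr (Or.inr ⟨i, j, h0, h1, rfl⟩))
  simpa [PresentedGroup.of] using this

end SpinOct

open SpinOct in
theorem stmt_13 (n : ℕ) (hn : 3 ≤ n) :
    (∀ i j : Fin (n - 1),
      (PresentedGroup.of (rels := spinOctRels n) i) ^ 4 = (PresentedGroup.of j) ^ 4) ∧
    (PresentedGroup.of (rels := spinOctRels n) (⟨0, by omega⟩ : Fin (n - 1))) ^ 4 ∈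
      Subgroup.center (PresentedGroup (spinOctRels n)) := by
  set a : Fin (n-1) → PresentedGroup (spinOctRels n) := PresentedGroup.of with ha
  have h2 : 2 ≤ n - 1 := by omega
  set i0 : Fin (n-1) := ⟨0, by omega⟩
  set i1 : Fin (n-1) := ⟨1, by omega⟩
  have hsq : (a i0) ^ 2 = a i1 * (a i0) ^ 2 * a i1 := sqrel rfl rfl
  have hb1 : a i1 * (a i0)^2 = (a i0)^2 * (a i1)⁻¹ :=
    eq_mul_inv_iff_mul_eq.mpr hsq.symm
  have hb2 : (a i1)⁻¹ * (a i0)^2 = (a i0)^2 * a i1 :=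
    inv_mul_eq_iff_eq_mul.mpr (by rw [← mul_assoc]; exact hsq)
  have hcomm1 : a i1 * (a i0)^4 = (a i0)^4 * a i1 := by
    calc a i1 * (a i0)^4 = a i1 * ((a i0)^2 * (a i0)^2) := by rw [← pow_add]
    _ = (a i0)^2 * (a i1)⁻¹ * (a i0)^2 := by rw [← mul_assoc, hb1]
    _ = (a i0)^2 * ((a i0)^2 * a i1) := by rw [mul_assoc, hb2]
    _ = (a i0)^4 * a i1 := by rw [← mul_assoc, ← pow_add]
  -- a0^4 commutes with all generators
  have hcomm : ∀ j : Fin (n-1), a j * (a i0)^4 = (a i0)^4 * a j := by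
    intro j
    rcases Nat.lt_or_ge (j : ℕ) 2 with hj | hj
    · interval_cases hjv : (j : ℕ)
      · have : j = i0 := Fin.ext (by simpa using hjv)
        rw [this]; exact (Commute.refl _).pow_right 4
      · have : j = i1 := Fin.ext (by simpa using hjv)
        rw [this]; exact hcomm1
    · have hf : Commute (a j) (a i0) := (far (by simpa using hj)).symm
      exact (hf.pow_right 4).eq
  have hcent : (a i0)^4 ∈ Subgroup.center (PresentedGroup (spinOctRels n)) := by
    rw [Subgroup.mem_center_iff]
    intro g
    have : g ∈ Subgroup.centralizer {(a i0)^4} := by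
      refine PresentedGroup.generated_by _ _ (fun j => ?_) g
      rw [Subgroup.mem_centralizer_singleton_iff]
      exact show a j * _ = _ from hcomm j
    exact Subgroup.mem_centralizer_singleton_iff.mp this
  have hz : ∀ g, g * (a i0)^4 = (a i0)^4 * g := Subgroup.mem_center_iff.mp hcent
  have key : ∀ k : ℕ, ∀ hk : k < n - 1, (a ⟨k, hk⟩)^4 = (a i0)^4 := by
    intro k
    induction k with
    | zero => intro hk; rfl
    | succ m ih =>
      intro hk
      have hm : m < n - 1 := by omega
      set x := a ⟨m, hm⟩
      set y := a ⟨m+1, hk⟩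
      have hbr : x * y * x = y * x * y := braid rfl
      have hconj : y = (x * y) * x * (x * y)⁻¹ :=
        eq_mul_inv_iff_mul_eq.mpr (by rw [← mul_assoc]; exact hbr.symm)
      have hy4 : y^4 = (x * y) * x^4 * (x * y)⁻¹ := by
        conv_lhs => rw [hconj]
        exact conj_pow (α := PresentedGroup (spinOctRels n))
      rw [show (a ⟨m+1, hk⟩ : PresentedGroup (spinOctRels n))^4 = y^4 from rfl, hy4, ih hm,
        hz (x*y), mul_inv_cancel_right]
  refine ⟨fun i j => ?_, hcent⟩
  have hi := key i i.isLt
  have hj := key j j.isLt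
  simp only [Fin.eta] at hi hj
  rw [hi, hj]
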